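/- Let K be a field and f₁,…,f_s ∈ K[X₁,…,Xₙ] (not necessarily homogeneous), with f_i^h the homogeneous component of highest degree of f_i. Let w be a monomial order refining total degree. Then LM(⟨f₁^h,…,f_s^h⟩) ⊆ LM(⟨f₁,…,f_s⟩), and if (f₁^h,…,f_s^h) is a regular sequence then LM(⟨f₁^h,…,f_s^h⟩) = LM(⟨f₁,…,f_s⟩). -/

import Mathlib

open MvPolynomial

/-- A monomial order on exponent vectors in `n` variables: a linear order compatible
with addition for which `0` is smallest. -/
structure MonOrder (n : ℕ) where
  le : (Fin n →₀ ℕ) → (Fin n →₀ ℕ) → Prop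
  le_refl : ∀ a, le a a
  le_trans : ∀ a b c, le a b → le b c → le a c
  le_antisymm : ∀ a b, le a b → le b a → a = b
  le_total : ∀ a b, le a b ∨ le b a
  add_le_add : ∀ a b c, le a b → le (a + c) (b + c)
  zero_le : ∀ a, le 0 a

/-- Strict comparison for a monomial order. -/
def MonOrder.lt {n : ℕ} (w : MonOrder n) (a b : Fin n →₀ ℕ) : Prop := w.le a b ∧ a ≠ b

/-- Total degree of an exponent vector. -/
def monDeg {n : ℕ} (a : Fin n →₀ ℕ) : ℕ := a.sum fun _ e => e

/-- Divisibility of monomials (on exponent vectors). -/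
def MonDvd {n : ℕ} (a b : Fin n →₀ ℕ) : Prop := ∃ c, b = a + c

/-- `m` is the leading monomial of `f` with respect to `w`. -/
def IsLM {n : ℕ} {K : Type*} [Field K] (w : MonOrder n)
    (f : MvPolynomial (Fin n) K) (m : Fin n →₀ ℕ) : Prop :=
  m ∈ f.support ∧ ∀ m' ∈ f.support, w.le m' m

/-- The set of leading monomials of nonzero elements of the ideal `I`. -/
def LMset {n : ℕ} {K : Type*} [Field K] (w : MonOrder n)
    (I : Ideal (MvPolynomial (Fin n) K)) : Set (Fin n →₀ ℕ) :=
  {m | ∃ f ∈ I, f ≠ 0 ∧ IsLM w f m}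

/-- `G` is a Gröbner basis of the ideal `I` with respect to `w`. -/
def IsGB {n : ℕ} {K : Type*} [Field K] (w : MonOrder n)
    (G : Set (MvPolynomial (Fin n) K)) (I : Ideal (MvPolynomial (Fin n) K)) : Prop :=
  G.Finite ∧ G ⊆ ↑I ∧ ∀ f ∈ I, f ≠ 0 → ∃ g ∈ G, ∃ mg mf,
    IsLM w g mg ∧ IsLM w f mf ∧ MonDvd mg mf

/-- `G` is the reduced Gröbner basis of `I`: a Gröbner basis whose elements are monic
and such that no monomial of an element is divisible by the leading monomial of
another element. -/
def IsReducedGB {n : ℕ} {K : Type*} [Field K] (w : MonOrder n)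
    (G : Set (MvPolynomial (Fin n) K)) (I : Ideal (MvPolynomial (Fin n) K)) : Prop :=
  IsGB w G I ∧ (∀ g ∈ G, ∀ m, IsLM w g m → MvPolynomial.coeff m g = 1) ∧
  ∀ g ∈ G, ∀ g' ∈ G, g ≠ g' → ∀ m ∈ g.support, ∀ m', IsLM w g' m' → ¬ MonDvd m' m

/-- `I` is a weakly-`w`-ideal: for every leading monomial `α` of an element of the
reduced Gröbner basis of `I`, every monomial `β` of the same degree with `β > α`
belongs to `LM(I)`. -/
def IsWeaklyW {n : ℕ} {K : Type*} [Field K] (w : MonOrder n)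
    (I : Ideal (MvPolynomial (Fin n) K)) : Prop :=
  ∀ G, IsReducedGB w G I → ∀ g ∈ G, ∀ α, IsLM w g α →
    ∀ β, monDeg β = monDeg α → w.lt α β → β ∈ LMset w I

/-!
For a monomial order refining the total degree, a polynomial and its leading form `p^h` have
the same leading monomial, so both statements are statements about leading forms.

Every leading form of an element of `⟨f₁^h,…,f_s^h⟩` is the leading form of an element of
`⟨f₁,…,f_s⟩`: take a representation `∑ aᵢ fᵢ^h`, keep only the homogeneous parts of the `aᵢ`
of the right degrees and replace each `fᵢ^h` by `fᵢ`.

Conversely, if `(f₁^h,…,f_s^h)` is regular then `g^h ∈ ⟨f₁^h,…,f_s^h⟩` for every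
`g ∈ ⟨f₁,…,f_s⟩`. Adjoin the generators one at a time and write `g = a f_k + p` with
`p ∈ ⟨f₁,…,f_{k-1}⟩`, with all terms of degree at most `D`. If the degree-`D` parts do not
cancel, `g^h` is their sum. If they do, `a_{D - deg f_k} f_k^h ∈ ⟨f₁^h,…,f_{k-1}^h⟩`, so by
regularity `a_{D - deg f_k}` lies in that ideal; subtracting from `a` an element of
`⟨f₁,…,f_{k-1}⟩` with the same top form gives a representation of `g` of degree `< D`.
-/

namespace MvPolynomial

variable {σ R : Type*} [CommRing R]

/-- `p^h` in the notation of the theorem. -/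
noncomputable def leadingForm (p : MvPolynomial σ R) : MvPolynomial σ R :=
  homogeneousComponent p.totalDegree p

@[simp]
lemma leadingForm_zero : leadingForm (0 : MvPolynomial σ R) = 0 :=
  map_zero _

lemma leadingForm_isHomogeneous (p : MvPolynomial σ R) :
    (leadingForm p).IsHomogeneous p.totalDegree :=
  homogeneousComponent_isHomogeneous _ _

lemma mem_support_leadingForm {p : MvPolynomial σ R} {m : σ →₀ ℕ} :
    m ∈ (leadingForm p).support ↔ m ∈ p.support ∧ m.degree = p.totalDegree := by
  rw [leadingForm, support_homogeneousComponent, Finset.mem_filter]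

lemma leadingForm_ne_zero {p : MvPolynomial σ R} (hp : p ≠ 0) : leadingForm p ≠ 0 := by
  obtain ⟨m, hm, hdeg⟩ := p.support.exists_mem_eq_sup (support_nonempty.mpr hp)
    fun m => m.sum fun _ e => e
  exact ne_zero_iff.mpr ⟨m, mem_support_iff.mp (mem_support_leadingForm.mpr ⟨hm, hdeg.symm⟩)⟩

lemma leadingForm_leadingForm (p : MvPolynomial σ R) :
    leadingForm (leadingForm p) = leadingForm p := by
  rcases eq_or_ne p 0 with rfl | hp
  · simp
  · rw [leadingForm, (leadingForm_isHomogeneous p).totalDegree (leadingForm_ne_zero hp)]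
    exact homogeneousComponent_eq_self (leadingForm_isHomogeneous p)

lemma leadingForm_eq_of_totalDegree_le {p : MvPolynomial σ R} {D : ℕ}
    (hpD : p.totalDegree ≤ D) (hD : homogeneousComponent D p ≠ 0) :
    leadingForm p = homogeneousComponent D p := by
  obtain rfl : p.totalDegree = D :=
    hpD.eq_or_lt.resolve_right fun hlt => hD (homogeneousComponent_eq_zero _ _ hlt)
  rfl

lemma totalDegree_lt_of_homogeneousComponent_eq_zero {p : MvPolynomial σ R} {D : ℕ}
    (hpD : p.totalDegree ≤ D) (hD : homogeneousComponent D p = 0) (hp : p ≠ 0) :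
    p.totalDegree < D :=
  hpD.lt_of_ne fun h => leadingForm_ne_zero hp (by rwa [leadingForm, h])

lemma homogeneousComponent_mem_of_leadingForm_mem {I : Ideal (MvPolynomial σ R)}
    {p : MvPolynomial σ R} {D : ℕ} (hpD : p.totalDegree ≤ D) (hp : leadingForm p ∈ I) :
    homogeneousComponent D p ∈ I := by
  rcases hpD.eq_or_lt with rfl | hlt
  · exact hp
  · rw [homogeneousComponent_eq_zero _ _ hlt]
    exact I.zero_mem

lemma totalDegree_sub_leadingForm_lt {p : MvPolynomial σ R} (hp : p - leadingForm p ≠ 0) :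
    (p - leadingForm p).totalDegree < p.totalDegree := by
  refine totalDegree_lt_of_homogeneousComponent_eq_zero
    ((totalDegree_sub _ _).trans (max_le le_rfl (leadingForm_isHomogeneous p).totalDegree_le))
    ?_ hp
  rw [map_sub, homogeneousComponent_eq_self (leadingForm_isHomogeneous p), ← leadingForm, sub_self]

section

attribute [local instance] MvPolynomial.gradedAlgebra

lemma homogeneousComponent_mul_of_isHomogeneous {p q : MvPolynomial σ R} {d : ℕ}
    (hq : q.IsHomogeneous d) (e : ℕ) :
    homogeneousComponent e (p * q) =
      if d ≤ e then homogeneousComponent (e - d) p * q else 0 := by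
  rw [← decomposition.decompose'_apply, ← decomposition.decompose'_apply]
  exact DirectSum.coe_decompose_mul_of_right_mem (homogeneousSubmodule σ R) e hq

end

lemma homogeneousComponent_mul_of_totalDegree_add_le {a f : MvPolynomial σ R} {D : ℕ}
    (h : a.totalDegree + f.totalDegree ≤ D) :
    homogeneousComponent D (a * f) =
      homogeneousComponent (D - f.totalDegree) a * leadingForm f := by
  have hlow : homogeneousComponent D (a * (f - leadingForm f)) = 0 := by
    rcases eq_or_ne (f - leadingForm f) 0 with h0 | h0
    · rw [h0, mul_zero, map_zero]
    · refine homogeneousComponent_eq_zero _ _ ((totalDegree_mul _ _).trans_lt ?_)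
      have := totalDegree_sub_leadingForm_lt h0
      omega
  rw [show a * f = a * (f - leadingForm f) + a * leadingForm f by ring, map_add, hlow, zero_add,
    homogeneousComponent_mul_of_isHomogeneous (leadingForm_isHomogeneous f), if_pos (by omega)]

lemma exists_homogeneousComponent_mul_eq (a f : MvPolynomial σ R) (e : ℕ) :
    ∃ v, (v * f).totalDegree ≤ e ∧
      homogeneousComponent e (v * f) = homogeneousComponent e (a * leadingForm f) := by
  rw [homogeneousComponent_mul_of_isHomogeneous (leadingForm_isHomogeneous f)]
  by_cases hf : f.totalDegree ≤ e
  · have hv := (homogeneousComponent_isHomogeneous (e - f.totalDegree) a).totalDegree_le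
    refine ⟨homogeneousComponent (e - f.totalDegree) a,
      (totalDegree_mul _ _).trans (by omega), ?_⟩
    rw [homogeneousComponent_mul_of_totalDegree_add_le (by omega), if_pos hf,
      homogeneousComponent_eq_self (homogeneousComponent_isHomogeneous _ _)]
  · exact ⟨0, by simp, by simp [hf]⟩

lemma exists_homogeneousComponent_eq_of_mem_span_leadingForm {F : Set (MvPolynomial σ R)}
    {u : MvPolynomial σ R} (hu : u ∈ Ideal.span (leadingForm '' F)) (e : ℕ) :
    ∃ g ∈ Ideal.span F, g.totalDegree ≤ e ∧
      homogeneousComponent e g = homogeneousComponent e u := by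
  obtain ⟨t, htF, c, rfl⟩ := (Submodule.mem_span_image_iff_exists_fun _).mp hu
  choose v hv using fun i : t => exists_homogeneousComponent_mul_eq (c i) i e
  refine ⟨∑ i, v i * i,
    Ideal.sum_mem _ fun i _ => Ideal.mul_mem_left _ _ (Ideal.subset_span (htF i.2)),
    totalDegree_finsetSum_le fun i _ => (hv i).1, ?_⟩
  simp only [map_sum, smul_eq_mul]
  exact Finset.sum_congr rfl fun i _ => (hv i).2

lemma exists_leadingForm_eq_of_mem_span_leadingForm {F : Set (MvPolynomial σ R)}
    {u : MvPolynomial σ R} (hu : u ∈ Ideal.span (leadingForm '' F)) :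
    ∃ g ∈ Ideal.span F, leadingForm g = leadingForm u := by
  rcases eq_or_ne (leadingForm u) 0 with h0 | h0
  · exact ⟨0, zero_mem _, by rw [leadingForm_zero, h0]⟩
  obtain ⟨g, hg, hgu, hcomp⟩ :=
    exists_homogeneousComponent_eq_of_mem_span_leadingForm hu u.totalDegree
  exact ⟨g, hg, (leadingForm_eq_of_totalDegree_le hgu (hcomp ▸ h0)).trans hcomp⟩

lemma exists_representation_of_homogeneousComponent_eq_zero {I J : Ideal (MvPolynomial σ R)}
    {f a p : MvPolynomial σ R} {D : ℕ}
    (hJI : ∀ u ∈ J, ∀ e, ∃ g ∈ I, g.totalDegree ≤ e ∧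
      homogeneousComponent e g = homogeneousComponent e u)
    (hreg : ∀ c, c * leadingForm f ∈ J → c ∈ J) (hp : p ∈ I)
    (hpJ : homogeneousComponent D p ∈ J) (haD : a.totalDegree + f.totalDegree ≤ D)
    (hpD : p.totalDegree ≤ D) (hD : homogeneousComponent D (a * f + p) = 0) :
    ∃ a', ∃ p' ∈ I, a' * f + p' = a * f + p ∧
      (a' ≠ 0 → a'.totalDegree + f.totalDegree ≤ D - 1) ∧ p'.totalDegree ≤ D - 1 := by
  have hcomp : homogeneousComponent D (a * f + p) =
      homogeneousComponent (D - f.totalDegree) a * leadingForm f + homogeneousComponent D p := by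
    rw [map_add, homogeneousComponent_mul_of_totalDegree_add_le haD]
  -- the degree-`D` parts cancel, so `a_{D - deg f} * f^h ∈ J`; lift `a_{D - deg f} ∈ J` to `h ∈ I`
  have hcancel := eq_neg_of_add_eq_zero_left (hcomp ▸ hD)
  obtain ⟨h, hhI, hhD, hhc⟩ := hJI _ (hreg _ (hcancel ▸ neg_mem hpJ)) (D - f.totalDegree)
  rw [homogeneousComponent_eq_self (homogeneousComponent_isHomogeneous _ _)] at hhc
  refine ⟨a - h, h * f + p, add_mem (I.mul_mem_right _ hhI) hp, by ring, fun ha' => ?_, ?_⟩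
  · have := totalDegree_lt_of_homogeneousComponent_eq_zero
      ((totalDegree_sub _ _).trans (max_le (by omega) hhD)) (by rw [map_sub, hhc, sub_self]) ha'
    omega
  · rcases eq_or_ne (h * f + p) 0 with hp0 | hp0
    · rw [hp0, totalDegree_zero]
      exact Nat.zero_le _
    have hhfD : (h * f).totalDegree ≤ D := (totalDegree_mul _ _).trans (by omega)
    have := totalDegree_lt_of_homogeneousComponent_eq_zero
      ((totalDegree_add _ _).trans (max_le hhfD hpD)) (by
        rw [map_add, homogeneousComponent_mul_of_totalDegree_add_le (by omega), hhc, ← hcomp, hD])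
      hp0
    omega

lemma leadingForm_mem_span_singleton_sup {I J : Ideal (MvPolynomial σ R)}
    {f : MvPolynomial σ R} (hIJ : ∀ g ∈ I, leadingForm g ∈ J)
    (hJI : ∀ u ∈ J, ∀ e, ∃ g ∈ I, g.totalDegree ≤ e ∧
      homogeneousComponent e g = homogeneousComponent e u)
    (hreg : ∀ c, c * leadingForm f ∈ J → c ∈ J) {g : MvPolynomial σ R}
    (hg : g ∈ Ideal.span {f} ⊔ I) : leadingForm g ∈ Ideal.span {leadingForm f} ⊔ J := by
  obtain ⟨q, hq, p, hp, rfl⟩ := Submodule.mem_sup.mp hg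
  obtain ⟨a, rfl⟩ := Ideal.mem_span_singleton'.mp hq
  suffices key : ∀ D a, ∀ p ∈ I, (a ≠ 0 → a.totalDegree + f.totalDegree ≤ D) →
      p.totalDegree ≤ D → leadingForm (a * f + p) ∈ Ideal.span {leadingForm f} ⊔ J from
    key _ a p hp (fun _ => le_max_left _ _) (le_max_right _ _)
  intro D
  induction D using Nat.strong_induction_on with
  | _ D ih =>
  intro a p hp haD hpD
  rcases eq_or_ne a 0 with rfl | ha
  · rw [zero_mul, zero_add]
    exact Ideal.mem_sup_right (hIJ p hp)
  have hpJ := homogeneousComponent_mem_of_leadingForm_mem hpD (hIJ p hp)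
  have hgD : (a * f + p).totalDegree ≤ D :=
    (totalDegree_add _ _).trans (max_le ((totalDegree_mul _ _).trans (haD ha)) hpD)
  by_cases hD : homogeneousComponent D (a * f + p) = 0
  · rcases eq_or_ne (a * f + p) 0 with hg0 | hg0
    · rw [hg0, leadingForm_zero]
      exact zero_mem _
    have hD0 := totalDegree_lt_of_homogeneousComponent_eq_zero hgD hD hg0
    obtain ⟨a', p', hp', heq, ha', hp'D⟩ :=
      exists_representation_of_homogeneousComponent_eq_zero hJI hreg hp hpJ (haD ha) hpD hD
    rw [← heq]
    exact ih (D - 1) (by omega) a' p' hp' ha' hp'D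
  · rw [leadingForm_eq_of_totalDegree_le hgD hD, map_add,
      homogeneousComponent_mul_of_totalDegree_add_le (haD ha)]
    exact add_mem (Ideal.mem_sup_left (Ideal.mul_mem_left _ _ (Ideal.mem_span_singleton_self _)))
      (Ideal.mem_sup_right hpJ)

lemma leadingForm_mem_span_of_isRegular {s : ℕ} (f : Fin s → MvPolynomial σ R)
    (hreg : ∀ j : Fin s, ∀ g,
      g * leadingForm (f j) ∈ Ideal.span ((fun i => leadingForm (f i)) '' {j' | j' < j}) →
        g ∈ Ideal.span ((fun i => leadingForm (f i)) '' {j' | j' < j}))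
    {g : MvPolynomial σ R} (hg : g ∈ Ideal.span (Set.range f)) :
    leadingForm g ∈ Ideal.span (Set.range fun i => leadingForm (f i)) := by
  suffices key : ∀ k g, g ∈ Ideal.span (f '' {i | (i : ℕ) < k}) →
      leadingForm g ∈ Ideal.span (leadingForm '' (f '' {i | (i : ℕ) < k})) by
    have hS : {i : Fin s | (i : ℕ) < s} = Set.univ := Set.eq_univ_of_forall Fin.is_lt
    simpa only [hS, Set.image_univ, Set.range_comp'] using key s g (by rwa [hS, Set.image_univ])
  intro k
  induction k with
  | zero =>
    intro g hg
    simp_all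
  | succ k ih =>
    intro g hg
    by_cases hk : k < s
    · have hS : {i : Fin s | (i : ℕ) < k + 1} = insert ⟨k, hk⟩ {i : Fin s | (i : ℕ) < k} := by
        ext i
        simp only [Set.mem_insert_iff, Set.mem_ofPred_eq, Fin.ext_iff]
        omega
      rw [hS, Set.image_insert_eq, Ideal.span_insert] at hg
      rw [hS, Set.image_insert_eq, Set.image_insert_eq, Ideal.span_insert]
      refine leadingForm_mem_span_singleton_sup ih
        (fun u hu => exists_homogeneousComponent_eq_of_mem_span_leadingForm hu) ?_ hg
      rw [Set.image_image]
      exact hreg ⟨k, hk⟩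
    · have hS : {i : Fin s | (i : ℕ) < k + 1} = {i : Fin s | (i : ℕ) < k} := by
        ext i
        simp only [Set.mem_ofPred_eq]
        omega
      rw [hS] at hg ⊢
      exact ih g hg

end MvPolynomial

section LeadingMonomials

variable {n : ℕ} {K : Type*} [Field K] {w : MonOrder n}

lemma monDeg_eq_degree (m : Fin n →₀ ℕ) : monDeg m = m.degree := rfl

lemma isLM_leadingForm_iff (hrefine : ∀ a b, monDeg a < monDeg b → w.lt a b)
    {p : MvPolynomial (Fin n) K} {m : Fin n →₀ ℕ} :
    IsLM w (leadingForm p) m ↔ IsLM w p m := by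
  constructor
  · rintro ⟨hm, hmax⟩
    obtain ⟨hmp, hmdeg⟩ := mem_support_leadingForm.mp hm
    refine ⟨hmp, fun m' hm' => ?_⟩
    by_cases hdeg : m'.degree = p.totalDegree
    · exact hmax m' (mem_support_leadingForm.mpr ⟨hm', hdeg⟩)
    · have : monDeg m' ≤ p.totalDegree := le_totalDegree hm'
      rw [monDeg_eq_degree] at this
      exact (hrefine m' m (by rw [monDeg_eq_degree, monDeg_eq_degree]; omega)).1
  · rintro ⟨hm, hmax⟩
    have hp : p ≠ 0 := by
      rintro rfl
      simp at hm
    obtain ⟨m₀, hm₀⟩ := ne_zero_iff.mp (leadingForm_ne_zero hp)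
    obtain ⟨hm₀p, hm₀deg⟩ := mem_support_leadingForm.mp (mem_support_iff.mpr hm₀)
    have hmdeg : m.degree = p.totalDegree := by
      by_contra hne
      have : monDeg m ≤ p.totalDegree := le_totalDegree hm
      rw [monDeg_eq_degree] at this
      have hlt := hrefine m m₀ (by rw [monDeg_eq_degree, monDeg_eq_degree]; omega)
      exact hlt.2 (w.le_antisymm _ _ hlt.1 (hmax m₀ hm₀p))
    exact ⟨mem_support_leadingForm.mpr ⟨hm, hmdeg⟩,
      fun m' hm' => hmax m' (mem_support_leadingForm.mp hm').1⟩

lemma LMset_subset_of_leadingForm_eq (hrefine : ∀ a b, monDeg a < monDeg b → w.lt a b)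
    {I J : Ideal (MvPolynomial (Fin n) K)} (h : ∀ u ∈ J, ∃ g ∈ I, leadingForm g = leadingForm u) :
    LMset w J ⊆ LMset w I := by
  rintro m ⟨u, hu, hu0, hm⟩
  obtain ⟨g, hg, hgu⟩ := h u hu
  refine ⟨g, hg, ?_, ?_⟩
  · rintro rfl
    exact leadingForm_ne_zero hu0 (by rw [← hgu, leadingForm_zero])
  · rwa [← isLM_leadingForm_iff hrefine, hgu, isLM_leadingForm_iff hrefine]

end LeadingMonomials

theorem affine_leading_monomials_general {n s : ℕ} {K : Type*} [Field K]
    (w : MonOrder n) (hrefine : ∀ a b, monDeg a < monDeg b → w.lt a b)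
    (f fh : Fin s → MvPolynomial (Fin n) K)
    (hfh : ∀ i, fh i = MvPolynomial.homogeneousComponent (f i).totalDegree (f i)) :
    LMset w (Ideal.span (Set.range fh)) ⊆ LMset w (Ideal.span (Set.range f)) ∧
    ((∀ j : Fin s, ∀ g, g * fh j ∈ Ideal.span (fh '' {j' | j' < j}) →
        g ∈ Ideal.span (fh '' {j' | j' < j})) →
      LMset w (Ideal.span (Set.range fh)) = LMset w (Ideal.span (Set.range f))) := by
  obtain rfl : fh = fun i => leadingForm (f i) := funext hfh
  have hsub : LMset w (Ideal.span (Set.range fun i => leadingForm (f i))) ⊆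
      LMset w (Ideal.span (Set.range f)) :=
    LMset_subset_of_leadingForm_eq hrefine fun u hu =>
      exists_leadingForm_eq_of_mem_span_leadingForm (by rwa [Set.range_comp'] at hu)
  refine ⟨hsub, fun hreg => hsub.antisymm ?_⟩
  exact LMset_subset_of_leadingForm_eq hrefine fun g hg =>
    ⟨leadingForm g, leadingForm_mem_span_of_isRegular f hreg hg, leadingForm_leadingForm g⟩

/-- **Leading monomials of an affine ideal and of its top homogeneous parts.**
For `w` refining total degree, `LM(⟨f₁^h,…,f_s^h⟩) ⊆ LM(⟨f₁,…,f_s⟩)`, with equality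
when `(f₁^h,…,f_s^h)` is a regular sequence. -/
theorem affine_leading_monomials {n s : ℕ} {K : Type*} [Field K]
    (w : MonOrder n) (hrefine : ∀ a b, monDeg a < monDeg b → w.lt a b)
    (f fh : Fin s → MvPolynomial (Fin n) K) (hf : ∀ i, f i ≠ 0)
    (hfh : ∀ i, fh i = MvPolynomial.homogeneousComponent (f i).totalDegree (f i)) :
    LMset w (Ideal.span (Set.range fh)) ⊆ LMset w (Ideal.span (Set.range f)) ∧
    ((∀ j : Fin s, ∀ g, g * fh j ∈ Ideal.span (fh '' {j' | j' < j}) →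
        g ∈ Ideal.span (fh '' {j' | j' < j})) →
      LMset w (Ideal.span (Set.range fh)) = LMset w (Ideal.span (Set.range f))) :=
  affine_leading_monomials_general w hrefine f fh hfh
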